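/- arXiv:2410.07417 — 2 statements merged into one kernel-verified Lean document; each statement's English description precedes it below -/
import Mathlib

section
/- Let 1 ≤ p < ∞. If A, B : Ω → L(ℓ_p) are independent weakly measurable random operators with integrable operator norms, then E(AB) = (E A)(E B), where AB denotes the composition and E denotes the Pettis integral. -/
open MeasureTheory ProbabilityTheory
open scoped ENNReal

noncomputable def coordCLM (p : ℝ≥0∞) [Fact (1 ≤ p)] (k : ℕ) :
    lp (fun _ : ℕ => ℝ) p →L[ℝ] ℝ :=
  LinearMap.mkContinuous
    { toFun := fun z => z k
      map_add' := fun _ _ => rfl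
      map_smul' := fun _ _ => rfl }
    1 (fun z => by
      have hp0 : p ≠ 0 := (lt_of_lt_of_le zero_lt_one Fact.out).ne'
      rw [one_mul]; exact lp.norm_apply_le_norm hp0 z k)

@[simp] lemma coordCLM_apply (p : ℝ≥0∞) [Fact (1 ≤ p)] (k : ℕ)
    (z : lp (fun _ : ℕ => ℝ) p) : coordCLM p k z = z k := rfl

lemma single_eq_smul' (p : ℝ≥0∞) [Fact (1 ≤ p)] (k : ℕ) (c : ℝ) :
    (lp.single p k c : lp (fun _ : ℕ => ℝ) p)
      = c • (lp.single p k (1:ℝ) : lp (fun _ : ℕ => ℝ) p) := by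
  have := lp.single_smul (E := fun _ : ℕ => ℝ) p k c (1:ℝ)
  rw [← this]
  norm_num

lemma expand_hasSum (p : ℝ≥0∞) [Fact (1 ≤ p)] (hp : p < ∞)
    (T : lp (fun _ : ℕ => ℝ) p →L[ℝ] lp (fun _ : ℕ => ℝ) p)
    (g : lp (fun _ : ℕ => ℝ) p →L[ℝ] ℝ) (u : lp (fun _ : ℕ => ℝ) p) :
    HasSum (fun k => u k * g (T (lp.single p k (1:ℝ)))) (g (T u)) := by
  have h1 : HasSum (fun k => lp.single p k (u k)) u := lp.hasSum_single hp.ne u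
  have h2 := (g.comp T).hasSum h1
  refine HasSum.congr_fun h2 fun k => ?_
  rw [single_eq_smul' p k ((u : ∀ _ : ℕ, ℝ) k)]
  simp only [ContinuousLinearMap.comp_apply, _root_.map_smul, smul_eq_mul]

lemma key_bound (p : ℝ≥0∞) [Fact (1 ≤ p)] (hp : p < ∞)
    (T : lp (fun _ : ℕ => ℝ) p →L[ℝ] lp (fun _ : ℕ => ℝ) p)
    (f : lp (fun _ : ℕ => ℝ) p →L[ℝ] ℝ) (u : lp (fun _ : ℕ => ℝ) p) (s : Finset ℕ) :
    ∑ k ∈ s, |f (T (lp.single p k (1:ℝ)))| * |(u : ∀ _ : ℕ, ℝ) k|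
      ≤ ‖f‖ * (‖T‖ * ‖u‖) := by
  have hp0 : p ≠ 0 := (lt_of_lt_of_le zero_lt_one Fact.out).ne'
  have hr : 0 < p.toReal := ENNReal.toReal_pos hp0 hp.ne
  set v : ℕ → ℝ := fun k => f (T (lp.single p k (1:ℝ))) with hv
  set σ : ℕ → ℝ := fun k => if v k * (u : ∀ _ : ℕ, ℝ) k < 0 then -1 else 1 with hσ
  set z : lp (fun _ : ℕ => ℝ) p := ∑ k ∈ s, lp.single p k (σ k * (u : ∀ _ : ℕ, ℝ) k) with hz
  have hzf : f (T z) = ∑ k ∈ s, |v k| * |(u : ∀ _ : ℕ, ℝ) k| := by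
    rw [hz, map_sum, map_sum]
    refine Finset.sum_congr rfl fun k _ => ?_
    rw [single_eq_smul' p k, _root_.map_smul, _root_.map_smul, smul_eq_mul]
    by_cases h : v k * (u : ∀ _ : ℕ, ℝ) k < 0
    · simp only [hσ, if_pos h]
      rw [← abs_mul, abs_of_neg h]
      show -1 * (u : ∀ _ : ℕ, ℝ) k * v k = _
      ring
    · simp only [hσ, if_neg h]
      rw [← abs_mul, abs_of_nonneg (not_lt.mp h)]
      show 1 * (u : ∀ _ : ℕ, ℝ) k * v k = _
      ring
  have hσ1 : ∀ k, |σ k| = 1 := by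
    intro k
    by_cases h : v k * (u : ∀ _ : ℕ, ℝ) k < 0 <;> simp [hσ, h]
  have hnz : ‖z‖ ≤ ‖u‖ := by
    rw [← Real.rpow_le_rpow_iff (norm_nonneg _) (norm_nonneg _) hr]
    calc ‖z‖ ^ p.toReal = ∑ k ∈ s, ‖σ k * (u : ∀ _ : ℕ, ℝ) k‖ ^ p.toReal :=
          lp.norm_sum_single hr _ s
      _ = ∑ k ∈ s, ‖(u : ∀ _ : ℕ, ℝ) k‖ ^ p.toReal := by
          refine Finset.sum_congr rfl fun k _ => ?_
          rw [Real.norm_eq_abs, abs_mul, hσ1 k, one_mul, Real.norm_eq_abs]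
      _ ≤ ‖u‖ ^ p.toReal := lp.sum_rpow_le_norm_rpow hr u s
  calc ∑ k ∈ s, |v k| * |(u : ∀ _ : ℕ, ℝ) k| = f (T z) := hzf.symm
    _ ≤ |f (T z)| := le_abs_self _
    _ ≤ ‖f‖ * ‖T z‖ := f.le_opNorm _
    _ ≤ ‖f‖ * (‖T‖ * ‖z‖) :=
        mul_le_mul_of_nonneg_left (T.le_opNorm z) (norm_nonneg f)
    _ ≤ ‖f‖ * (‖T‖ * ‖u‖) := by
        have := mul_le_mul_of_nonneg_left hnz (norm_nonneg T)
        exact mul_le_mul_of_nonneg_left this (norm_nonneg f)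

/-- If `A, B : Ω → L(ℓ_p)` are independent weakly measurable random operators with
integrable norms, then `E(AB) = (E A)(E B)` (Pettis integrals). -/
theorem pettis_integral_comp_of_indep
    {Ω : Type*} [MeasurableSpace Ω] (μ : Measure Ω) [IsProbabilityMeasure μ]
    (p : ℝ≥0∞) [Fact (1 ≤ p)] (hp : p < ∞)
    (A B : Ω → (lp (fun _ : ℕ => ℝ) p →L[ℝ] lp (fun _ : ℕ => ℝ) p))
    (hweakA : ∀ (x : lp (fun _ : ℕ => ℝ) p) (f : lp (fun _ : ℕ => ℝ) p →L[ℝ] ℝ),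
      Measurable fun ω => f (A ω x))
    (hweakB : ∀ (x : lp (fun _ : ℕ => ℝ) p) (f : lp (fun _ : ℕ => ℝ) p →L[ℝ] ℝ),
      Measurable fun ω => f (B ω x))
    (hintA : Integrable (fun ω => ‖A ω‖) μ)
    (hintB : Integrable (fun ω => ‖B ω‖) μ)
    (hindep : ∀ (x y : lp (fun _ : ℕ => ℝ) p)
      (f g : lp (fun _ : ℕ => ℝ) p →L[ℝ] ℝ),
      IndepFun (fun ω => f (A ω x)) (fun ω => g (B ω y)) μ)
    (EA EB : lp (fun _ : ℕ => ℝ) p →L[ℝ] lp (fun _ : ℕ => ℝ) p)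
    (hEA : ∀ (x : lp (fun _ : ℕ => ℝ) p) (f : lp (fun _ : ℕ => ℝ) p →L[ℝ] ℝ),
      ∫ ω, f (A ω x) ∂μ = f (EA x))
    (hEB : ∀ (x : lp (fun _ : ℕ => ℝ) p) (f : lp (fun _ : ℕ => ℝ) p →L[ℝ] ℝ),
      ∫ ω, f (B ω x) ∂μ = f (EB x)) :
    ∀ (x : lp (fun _ : ℕ => ℝ) p) (f : lp (fun _ : ℕ => ℝ) p →L[ℝ] ℝ),
      ∫ ω, f (A ω (B ω x)) ∂μ = f (EA (EB x)) := by
  intro x f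
  have hp0 : p ≠ 0 := (lt_of_lt_of_le zero_lt_one Fact.out).ne'
  have hr : 0 < p.toReal := ENNReal.toReal_pos hp0 hp.ne
  set e : ℕ → lp (fun _ : ℕ => ℝ) p := fun k => lp.single p k (1:ℝ) with he_def
  have he : ∀ k, ‖e k‖ = 1 := by
    intro k
    have := lp.norm_single (E := fun _ : ℕ => ℝ) (pos_iff_ne_zero.mpr hp0) k (1:ℝ)
    simpa using this
  set X : ℕ → Ω → ℝ := fun k ω => f (A ω (e k)) with hX_def
  set Y : ℕ → Ω → ℝ := fun k ω => (B ω x : ∀ _ : ℕ, ℝ) k with hY_def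
  have hXm : ∀ k, Measurable (X k) := fun k => hweakA (e k) f
  have hYm : ∀ k, Measurable (Y k) := fun k => hweakB x (coordCLM p k)
  have hXint : ∀ k, Integrable (X k) μ := by
    intro k
    refine (hintA.const_mul ‖f‖).mono' (hXm k).aestronglyMeasurable ?_
    filter_upwards with ω
    calc ‖X k ω‖ ≤ ‖f‖ * ‖A ω (e k)‖ := f.le_opNorm _
      _ ≤ ‖f‖ * (‖A ω‖ * ‖e k‖) :=
          mul_le_mul_of_nonneg_left ((A ω).le_opNorm _) (norm_nonneg f)
      _ = ‖f‖ * ‖A ω‖ := by rw [he k, mul_one]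
  have hYint : ∀ k, Integrable (Y k) μ := by
    intro k
    refine (hintB.const_mul ‖x‖).mono' (hYm k).aestronglyMeasurable ?_
    filter_upwards with ω
    calc ‖Y k ω‖ ≤ ‖B ω x‖ := lp.norm_apply_le_norm hp0 (B ω x) k
      _ ≤ ‖B ω‖ * ‖x‖ := (B ω).le_opNorm x
      _ = ‖x‖ * ‖B ω‖ := mul_comm _ _
  have hInd : ∀ k, IndepFun (X k) (Y k) μ := fun k => hindep (e k) x f (coordCLM p k)
  have hIndAbs : ∀ k, IndepFun (fun ω => |X k ω|) (fun ω => |Y k ω|) μ :=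
    fun k => (hInd k).comp measurable_abs measurable_abs
  have hXY : ∀ k, Integrable (fun ω => X k ω * Y k ω) μ :=
    fun k => (hInd k).integrable_mul (hXint k) (hYint k)
  -- the ℓ¹ bound
  set c : ℕ → ℝ := fun k => (∫ ω, |X k ω| ∂μ) * (∫ ω, |Y k ω| ∂μ) with hc_def
  have hc0 : ∀ k, 0 ≤ c k := fun k =>
    mul_nonneg (integral_nonneg fun ω => abs_nonneg _) (integral_nonneg fun ω => abs_nonneg _)
  have habs : ∀ k, ∫ ω, |X k ω * Y k ω| ∂μ = c k := by
    intro k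
    have h1 : (fun ω => |X k ω * Y k ω|) = fun ω => |X k ω| * |Y k ω| := by
      funext ω; exact abs_mul _ _
    rw [h1]
    exact (hIndAbs k).integral_fun_mul_eq_mul_integral (hXint k).abs.aestronglyMeasurable (hYint k).abs.aestronglyMeasurable
  have hsumc : Summable c := by
    refine summable_of_sum_range_le hc0 (c := ‖f‖ * ((∫ ω, ‖A ω‖ ∂μ) * ((∫ ω, ‖B ω‖ ∂μ) * ‖x‖)))
      fun n => ?_
    set s := Finset.range n
    have step1 : ∑ k ∈ s, c k
        = ∫ z, (∑ k ∈ s, |X k z.1| * |Y k z.2|) ∂(μ.prod μ) := by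
      rw [integral_finset_sum s fun k _ => ((hXint k).abs.mul_prod (hYint k).abs)]
      exact Finset.sum_congr rfl fun k _ => (integral_prod_mul _ _).symm
    have step2 : ∫ z, (∑ k ∈ s, |X k z.1| * |Y k z.2|) ∂(μ.prod μ)
        ≤ ∫ z, ‖f‖ * (‖A z.1‖ * (‖B z.2‖ * ‖x‖)) ∂(μ.prod μ) := by
      refine integral_mono
        (integrable_finset_sum s fun k _ => ((hXint k).abs.mul_prod (hYint k).abs)) ?_ ?_
      · have : (fun z : Ω × Ω => ‖f‖ * (‖A z.1‖ * (‖B z.2‖ * ‖x‖)))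
            = fun z : Ω × Ω => ‖f‖ * ((fun ω => ‖A ω‖) z.1 * ((fun ω => ‖B ω‖ * ‖x‖) z.2)) := rfl
        rw [this]
        exact (hintA.mul_prod (hintB.mul_const ‖x‖)).const_mul ‖f‖
      · intro z
        have hk := key_bound p hp (A z.1) f (B z.2 x) s
        have hk2 : ‖f‖ * (‖A z.1‖ * ‖B z.2 x‖) ≤ ‖f‖ * (‖A z.1‖ * (‖B z.2‖ * ‖x‖)) := by
          have h1 := mul_le_mul_of_nonneg_left ((B z.2).le_opNorm x) (norm_nonneg (A z.1))
          exact mul_le_mul_of_nonneg_left h1 (norm_nonneg f)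
        exact le_trans hk hk2
    have step3 : ∫ z, ‖f‖ * (‖A z.1‖ * (‖B z.2‖ * ‖x‖)) ∂(μ.prod μ)
        = ‖f‖ * ((∫ ω, ‖A ω‖ ∂μ) * ((∫ ω, ‖B ω‖ ∂μ) * ‖x‖)) := by
      rw [integral_const_mul]
      have h4 : ∫ (z : Ω × Ω), ‖A z.1‖ * (‖B z.2‖ * ‖x‖) ∂(μ.prod μ)
          = (∫ ω, ‖A ω‖ ∂μ) * ∫ ω, ‖B ω‖ * ‖x‖ ∂μ :=
        integral_prod_mul (fun ω => ‖A ω‖) (fun ω => ‖B ω‖ * ‖x‖)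
      rw [h4, integral_mul_const]
    calc ∑ k ∈ s, c k = _ := step1
      _ ≤ _ := step2
      _ = _ := step3
  -- the lintegral summability for integral_tsum
  have hlint : ∑' k, ∫⁻ ω, ‖X k ω * Y k ω‖₊ ∂μ ≠ ⊤ := by
    have heq : ∀ k, ∫⁻ ω, ‖X k ω * Y k ω‖₊ ∂μ = ENNReal.ofReal (c k) := by
      intro k
      show ∫⁻ ω, ‖X k ω * Y k ω‖ₑ ∂μ = _
      rw [← ofReal_integral_norm_eq_lintegral_enorm (hXY k)]
      congr 1
      rw [← habs k]
      exact integral_congr_ae (Filter.Eventually.of_forall fun ω => (Real.norm_eq_abs _))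
    rw [tsum_congr heq, ← ENNReal.ofReal_tsum_of_nonneg hc0 hsumc]
    exact ENNReal.ofReal_ne_top
  -- pointwise expansion
  have hpt : ∀ ω, ∑' k, X k ω * Y k ω = f (A ω (B ω x)) := by
    intro ω
    have h := expand_hasSum p hp (A ω) f (B ω x)
    rw [← h.tsum_eq]
    exact tsum_congr fun k => mul_comm _ _
  -- final computation
  have hfin := expand_hasSum p hp EA f (EB x)
  calc ∫ ω, f (A ω (B ω x)) ∂μ = ∫ ω, ∑' k, X k ω * Y k ω ∂μ := by
        refine integral_congr_ae (Filter.Eventually.of_forall fun ω => (hpt ω).symm)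
    _ = ∑' k, ∫ ω, X k ω * Y k ω ∂μ :=
        integral_tsum (fun k => ((hXm k).mul (hYm k)).aestronglyMeasurable) hlint
    _ = ∑' k, (EB x : ∀ _ : ℕ, ℝ) k * f (EA (e k)) := by
        refine tsum_congr fun k => ?_
        have hm : ∫ ω, X k ω * Y k ω ∂μ = (∫ ω, X k ω ∂μ) * ∫ ω, Y k ω ∂μ :=
          (hInd k).integral_fun_mul_eq_mul_integral (hXint k).aestronglyMeasurable (hYint k).aestronglyMeasurable
        have hEBk : ∫ ω, Y k ω ∂μ = (EB x : ∀ _ : ℕ, ℝ) k := hEB x (coordCLM p k)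
        rw [hm, hEA (e k) f, hEBk]
        exact mul_comm _ _
    _ = f (EA (EB x)) := hfin.tsum_eq
end

section
/- Let 1 ≤ p ≤ 2 ≤ q ≤ ∞ with 1/p + 1/q = 1. Let A : Ω → L(ℓ_p) be a weakly measurable random operator with bounded norm, and set Var A := E((A − E A)*(A − E A)) ∈ L(ℓ_p, ℓ_q) (restricting adjoints to ℓ_1 when p = 1). Then for every ε > 0 and x ∈ ℓ_p, P(‖(A − E A)x‖_{ℓ_2} > ε) ≤ ‖(Var A)x‖_{ℓ_q} · ‖x‖_{ℓ_p} / ε². -/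
open MeasureTheory
open scoped ENNReal

noncomputable def evalCLM (p : ℝ≥0∞) [Fact (1 ≤ p)] (n : ℕ) :
    lp (fun _ : ℕ => ℝ) p →L[ℝ] ℝ :=
  LinearMap.mkContinuous
    { toFun := fun f => f n
      map_add' := fun f g => by
        have := lp.coeFn_add f g
        exact congrFun this n
      map_smul' := fun c f => by
        have := lp.coeFn_smul c f
        exact congrFun this n }
    1 (fun f => by
      have hp0 : p ≠ 0 := (zero_lt_one.trans_le (Fact.out : (1:ℝ≥0∞) ≤ p)).ne'
      simpa using lp.norm_apply_le_norm hp0 f n)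

lemma sum_sq_le_norm_sq {p : ℝ≥0∞} [Fact (1 ≤ p)] (hp2 : p ≤ 2)
    (f : lp (fun _ : ℕ => ℝ) p) : ∑' n, (f n) ^ 2 ≤ ‖f‖ ^ 2 := by
  have hp1 : 1 ≤ p := Fact.out
  have hpt : p ≠ ∞ := (hp2.trans_lt (by norm_num)).ne
  have hpr1 : 1 ≤ p.toReal := by
    have := ENNReal.toReal_mono hpt hp1
    simpa using this
  have hpr2 : p.toReal ≤ 2 := by
    have := ENNReal.toReal_mono (by norm_num : (2:ℝ≥0∞) ≠ ∞) hp2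
    simpa using this
  have hpr0 : 0 < p.toReal := lt_of_lt_of_le one_pos hpr1
  have hp0 : p ≠ 0 := (zero_lt_one.trans_le hp1).ne'
  have hs : HasSum (fun i => ‖f i‖ ^ p.toReal) (‖f‖ ^ p.toReal) := lp.hasSum_norm hpr0 f
  have key : ∀ i, (f i) ^ 2 ≤ ‖f‖ ^ (2 - p.toReal) * ‖f i‖ ^ p.toReal := by
    intro i
    have h1 : (f i) ^ 2 = ‖f i‖ ^ (2 : ℝ) := by
      rw [Real.rpow_two, Real.norm_eq_abs, sq_abs]
    have h2 : ‖f i‖ ^ (2 : ℝ) = ‖f i‖ ^ (2 - p.toReal) * ‖f i‖ ^ p.toReal := by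
      rw [← Real.rpow_add' (norm_nonneg _) (by norm_num)]
      norm_num
    rw [h1, h2]
    have h3 : ‖f i‖ ^ (2 - p.toReal) ≤ ‖f‖ ^ (2 - p.toReal) :=
      Real.rpow_le_rpow (norm_nonneg _) (lp.norm_apply_le_norm hp0 f i) (by linarith)
    exact mul_le_mul_of_nonneg_right h3 (Real.rpow_nonneg (norm_nonneg _) _)
  have hsum2 : Summable fun i => ‖f‖ ^ (2 - p.toReal) * ‖f i‖ ^ p.toReal :=
    hs.summable.mul_left _
  have hsum1 : Summable fun i => (f i) ^ 2 :=
    Summable.of_nonneg_of_le (fun i => sq_nonneg _) key hsum2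
  calc ∑' n, (f n) ^ 2 ≤ ∑' n, ‖f‖ ^ (2 - p.toReal) * ‖f n‖ ^ p.toReal :=
        Summable.tsum_le_tsum key hsum1 hsum2
    _ = ‖f‖ ^ (2 - p.toReal) * ‖f‖ ^ p.toReal := by
        rw [tsum_mul_left, hs.tsum_eq]
    _ = ‖f‖ ^ (2 : ℝ) := by rw [← Real.rpow_add' (norm_nonneg _) (by norm_num)]; norm_num
    _ = ‖f‖ ^ 2 := by rw [Real.rpow_two]

lemma pairing_le_norm_mul_norm {p q : ℝ≥0∞} [Fact (1 ≤ p)] [Fact (1 ≤ q)]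
    (hp2 : p ≤ 2) (hq2 : 2 ≤ q) (hpq : 1 / p + 1 / q = 1)
    (u : lp (fun _ : ℕ => ℝ) q) (x : lp (fun _ : ℕ => ℝ) p) :
    ∑' n, u n * x n ≤ ‖u‖ * ‖x‖ := by
  have hp1 : 1 ≤ p := Fact.out
  have hpt : p ≠ ∞ := (hp2.trans_lt (by norm_num)).ne
  have hp0 : p ≠ 0 := (zero_lt_one.trans_le hp1).ne'
  have hq0 : q ≠ 0 := (zero_lt_one.trans_le (le_trans (by norm_num) hq2)).ne'
  rcases eq_or_ne q ∞ with hq | hq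
  · -- q = ∞, p = 1
    have hp : p = 1 := by
      rw [hq] at hpq
      simp only [one_div] at hpq
      simpa [ENNReal.inv_eq_one] using hpq
    have hs : HasSum (fun i => ‖x i‖ ^ p.toReal) (‖x‖ ^ p.toReal) :=
      lp.hasSum_norm (by simp [hp]) x
    have hptr : p.toReal = 1 := by simp [hp]
    rw [hptr] at hs
    simp only [Real.rpow_one] at hs
    have hb : ∀ n, u n * x n ≤ ‖u‖ * ‖x n‖ := by
      intro n
      calc u n * x n ≤ |u n * x n| := le_abs_self _
        _ = |u n| * |x n| := abs_mul _ _
        _ ≤ ‖u‖ * ‖x n‖ := by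
            have := lp.norm_apply_le_norm (hq ▸ ENNReal.top_ne_zero) u n
            exact mul_le_mul_of_nonneg_right (by simpa using this) (abs_nonneg _)
    have hsum2 : Summable fun n => ‖u‖ * ‖x n‖ := hs.summable.mul_left _
    have hsum1 : Summable fun n => u n * x n := by
      rw [← summable_abs_iff]
      refine Summable.of_nonneg_of_le (fun n => abs_nonneg _) (fun n => ?_) hsum2
      calc |u n * x n| = |u n| * |x n| := abs_mul _ _
        _ ≤ ‖u‖ * ‖x n‖ := by
            have := lp.norm_apply_le_norm (hq ▸ ENNReal.top_ne_zero) u n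
            exact mul_le_mul_of_nonneg_right (by simpa using this) (abs_nonneg _)
    calc ∑' n, u n * x n ≤ ∑' n, ‖u‖ * ‖x n‖ := Summable.tsum_le_tsum hb hsum1 hsum2
      _ = ‖u‖ * ∑' n, ‖x n‖ := tsum_mul_left
      _ = ‖u‖ * ‖x‖ := by rw [hs.tsum_eq]
  · -- q finite
    have hqr : 2 ≤ q.toReal := by
      have := ENNReal.toReal_mono hq hq2
      simpa using this
    have hinv : q.toReal⁻¹ + p.toReal⁻¹ = 1 := by
      have h := hpq
      simp only [one_div] at h
      have hpi : p⁻¹ ≠ ∞ := by simpa using hp0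
      have hqi : q⁻¹ ≠ ∞ := by simpa using hq0
      have := congrArg ENNReal.toReal h
      rw [ENNReal.toReal_add hpi hqi, ENNReal.toReal_inv, ENNReal.toReal_inv] at this
      simpa [add_comm] using this
    have hc : q.toReal.HolderConjugate p.toReal := Real.holderConjugate_iff.mpr ⟨by linarith, hinv⟩
    have h := lp.tsum_mul_le_mul_norm hc u x
    have hb : ∀ n, u n * x n ≤ ‖u n‖ * ‖x n‖ := fun n => by
      calc u n * x n ≤ |u n * x n| := le_abs_self _
        _ = ‖u n‖ * ‖x n‖ := by rw [abs_mul]; rfl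
    have hsum1 : Summable fun n => u n * x n := by
      rw [← summable_abs_iff]
      refine Summable.of_nonneg_of_le (fun n => abs_nonneg _) (fun n => ?_) h.1
      rw [abs_mul]; rfl
    calc ∑' n, u n * x n ≤ ∑' n, ‖u n‖ * ‖x n‖ := Summable.tsum_le_tsum hb hsum1 h.1
      _ ≤ ‖u‖ * ‖x‖ := h.2

/-- Chebyshev's inequality for random operators: if `1 ≤ p ≤ 2 ≤ q ≤ ∞` are conjugate,
`A : Ω → L(ℓ_p)` is weakly measurable with bounded norm, and `V = Var A ∈ L(ℓ_p, ℓ_q)`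
is the variance operator, characterized by
`⟨(Var A) x, y⟩ = E⟨(A - E A)x, (A - E A)y⟩` (the pairing being given coordinatewise,
using `ℓ_p ⊂ ℓ_2`), then `P(‖(A - E A)x‖₂ > ε) ≤ ‖(Var A)x‖_q ‖x‖_p / ε²`. -/
theorem chebyshev_inequality_random_operator
    {Ω : Type*} [MeasurableSpace Ω] (μ : Measure Ω) [IsProbabilityMeasure μ]
    (p q : ℝ≥0∞) [Fact (1 ≤ p)] [Fact (1 ≤ q)] (hp2 : p ≤ 2) (hq2 : 2 ≤ q)
    (hpq : 1 / p + 1 / q = 1)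
    (A : Ω → (lp (fun _ : ℕ => ℝ) p →L[ℝ] lp (fun _ : ℕ => ℝ) p))
    (hweak : ∀ (x : lp (fun _ : ℕ => ℝ) p) (f : lp (fun _ : ℕ => ℝ) p →L[ℝ] ℝ),
      Measurable fun ω => f (A ω x))
    (ρ : ℝ) (hbdd : ∀ ω, ‖A ω‖ ≤ ρ)
    (EA : lp (fun _ : ℕ => ℝ) p →L[ℝ] lp (fun _ : ℕ => ℝ) p)
    (hEA : ∀ (x : lp (fun _ : ℕ => ℝ) p) (f : lp (fun _ : ℕ => ℝ) p →L[ℝ] ℝ),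
      ∫ ω, f (A ω x) ∂μ = f (EA x))
    (V : lp (fun _ : ℕ => ℝ) p →L[ℝ] lp (fun _ : ℕ => ℝ) q)
    (hV : ∀ x y : lp (fun _ : ℕ => ℝ) p,
      ∑' n : ℕ, (V x) n * y n
        = ∫ ω, ∑' n : ℕ, (A ω x - EA x) n * (A ω y - EA y) n ∂μ) :
    ∀ (ε : ℝ), 0 < ε → ∀ x : lp (fun _ : ℕ => ℝ) p,
      (μ {ω | ε < (∑' n : ℕ, ((A ω x - EA x) n) ^ 2) ^ (1 / 2 : ℝ)}).toReal
        ≤ ‖V x‖ * ‖x‖ / ε ^ 2 := by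
  intro ε hε x
  have hp1 : (1:ℝ≥0∞) ≤ p := Fact.out
  set z : Ω → lp (fun _ : ℕ => ℝ) p := fun ω => A ω x - EA x with hz
  set f : Ω → ℝ := fun ω => ∑' n, ((z ω) n) ^ 2 with hfdef
  set g : Ω → ℝ≥0∞ := fun ω => ∑' n, ENNReal.ofReal (((z ω) n) ^ 2) with hgdef
  have hsumz : ∀ ω, Summable fun n => ((z ω) n) ^ 2 := by
    intro ω
    have h2 : Memℓp (fun n => (z ω) n) 2 := (lp.memℓp (z ω)).of_exponent_ge hp2
    have := h2.summable (by norm_num)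
    refine this.congr fun n => ?_
    simp [Real.rpow_two, sq_abs]
  have hf0 : ∀ ω, 0 ≤ f ω := fun ω => tsum_nonneg fun n => sq_nonneg _
  have hgf : ∀ ω, g ω = ENNReal.ofReal (f ω) := fun ω =>
    (ENNReal.ofReal_tsum_of_nonneg (fun n => sq_nonneg _) (hsumz ω)).symm
  have hmeas_n : ∀ n, Measurable fun ω => (z ω) n := by
    intro n
    have h1 : Measurable fun ω => (evalCLM p n) (A ω x) := hweak x (evalCLM p n)
    have heq : (fun ω => (z ω) n) = fun ω => (evalCLM p n) (A ω x) - (EA x) n := by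
      funext ω
      have := lp.coeFn_sub (A ω x) (EA x)
      have h2 := congrFun this n
      simpa [z, evalCLM] using h2
    rw [heq]
    exact h1.sub measurable_const
  have hg_meas : Measurable g :=
    Measurable.ennreal_tsum fun n => ((hmeas_n n).pow_const 2).ennreal_ofReal
  have hf_meas : Measurable f := by
    have heq : f = fun ω => (g ω).toReal := by
      funext ω; rw [hgf ω, ENNReal.toReal_ofReal (hf0 ω)]
    rw [heq]
    exact ENNReal.measurable_toReal.comp hg_meas
  set C : ℝ := (ρ * ‖x‖ + ‖EA‖ * ‖x‖) ^ 2 with hC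
  have hfC : ∀ ω, f ω ≤ C := by
    intro ω
    have h1 : f ω ≤ ‖z ω‖ ^ 2 := sum_sq_le_norm_sq hp2 (z ω)
    have h2 : ‖z ω‖ ≤ ρ * ‖x‖ + ‖EA‖ * ‖x‖ := by
      calc ‖z ω‖ ≤ ‖A ω x‖ + ‖EA x‖ := norm_sub_le _ _
        _ ≤ ρ * ‖x‖ + ‖EA‖ * ‖x‖ := by
            gcongr
            · exact le_trans ((A ω).le_opNorm x)
                (mul_le_mul_of_nonneg_right (hbdd ω) (norm_nonneg x))
            · exact EA.le_opNorm x
    exact h1.trans (pow_le_pow_left₀ (norm_nonneg _) h2 2)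
  have hf_int : Integrable f μ := by
    refine (integrable_const C).mono' hf_meas.aestronglyMeasurable ?_
    exact Filter.Eventually.of_forall fun ω => by
      rw [Real.norm_eq_abs, abs_of_nonneg (hf0 ω)]; exact hfC ω
  have hint : ∫ ω, f ω ∂μ ≤ ‖V x‖ * ‖x‖ := by
    have h1 := hV x x
    have h2 : (∫ ω, ∑' n : ℕ, (A ω x - EA x) n * (A ω x - EA x) n ∂μ) = ∫ ω, f ω ∂μ := by
      refine integral_congr_ae (Filter.Eventually.of_forall fun ω => ?_)
      exact tsum_congr fun n => (sq ((z ω) n)).symm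
    rw [h2] at h1
    rw [← h1]
    exact pairing_le_norm_mul_norm hp2 hq2 hpq (V x) x
  have hl : ∫⁻ ω, g ω ∂μ = ENNReal.ofReal (∫ ω, f ω ∂μ) := by
    rw [ofReal_integral_eq_lintegral_ofReal hf_int
      (Filter.Eventually.of_forall hf0)]
    exact lintegral_congr fun ω => (hgf ω)
  have hsub : {ω | ε < (∑' n : ℕ, ((A ω x - EA x) n) ^ 2) ^ (1 / 2 : ℝ)}
      ⊆ {ω | ENNReal.ofReal (ε ^ 2) ≤ g ω} := by
    intro ω hω
    simp only [Set.mem_setOf_eq] at hω ⊢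
    have hω' : ε < f ω ^ (1 / 2 : ℝ) := hω
    have h1 : ε ^ 2 < f ω := by
      have h2 : (f ω ^ (1 / 2 : ℝ)) ^ 2 = f ω := by
        rw [← Real.rpow_natCast (f ω ^ (1 / 2 : ℝ)) 2, ← Real.rpow_mul (hf0 ω)]
        norm_num
      calc ε ^ 2 < (f ω ^ (1 / 2 : ℝ)) ^ 2 :=
            pow_lt_pow_left₀ hω' hε.le (by norm_num)
        _ = f ω := h2
    rw [hgf ω]
    exact ENNReal.ofReal_le_ofReal h1.le
  have hcheb : μ {ω | ENNReal.ofReal (ε ^ 2) ≤ g ω}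
      ≤ (∫⁻ ω, g ω ∂μ) / ENNReal.ofReal (ε ^ 2) :=
    meas_ge_le_lintegral_div hg_meas.aemeasurable
      (by simp [ENNReal.ofReal_eq_zero, not_le, pow_pos hε, hε.ne']) ENNReal.ofReal_ne_top
  have hne : ENNReal.ofReal (ε ^ 2) ≠ 0 := by
    simp [ENNReal.ofReal_eq_zero, not_le, pow_pos hε, hε.ne']
  have hmain : μ {ω | ε < (∑' n : ℕ, ((A ω x - EA x) n) ^ 2) ^ (1 / 2 : ℝ)}
      ≤ ENNReal.ofReal (‖V x‖ * ‖x‖) / ENNReal.ofReal (ε ^ 2) := by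
    refine le_trans (measure_mono hsub) (hcheb.trans ?_)
    rw [hl]
    exact ENNReal.div_le_div_right (ENNReal.ofReal_le_ofReal hint) _
  have hfin : ENNReal.ofReal (‖V x‖ * ‖x‖) / ENNReal.ofReal (ε ^ 2) ≠ ∞ :=
    (ENNReal.div_lt_top ENNReal.ofReal_ne_top hne).ne
  calc (μ {ω | ε < (∑' n : ℕ, ((A ω x - EA x) n) ^ 2) ^ (1 / 2 : ℝ)}).toReal
      ≤ (ENNReal.ofReal (‖V x‖ * ‖x‖) / ENNReal.ofReal (ε ^ 2)).toReal :=
        ENNReal.toReal_mono hfin hmain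
    _ = ‖V x‖ * ‖x‖ / ε ^ 2 := by
        rw [ENNReal.toReal_div, ENNReal.toReal_ofReal
          (mul_nonneg (norm_nonneg _) (norm_nonneg _)),
          ENNReal.toReal_ofReal (sq_nonneg ε)]
end
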